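/- Let γ > 0, let d, C be positive natural numbers, and for i = 1, …, k let X_i be a real N_i × d matrix and Y_i a real N_i × C matrix. Define R_j = (∑_{i=1}^{j} X_iᵀ X_i + γ I_d)⁻¹, Q_j = ∑_{i=1}^{j} X_iᵀ Y_i, and W_j = R_j Q_j (the ridge-regression solution on the joint data of phases 1 through j). Then for every k ≥ 1, W_k = (I_d − R_k X_kᵀ X_k) W_{k−1} + R_k X_kᵀ Y_k, where W_0 is the d × C zero matrix. -/

import Mathlib

/-!
With `A j = ∑ i ≤ j, Xᵢᵀ Xᵢ + γ I` (positive definite, hence invertible) we have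
`A k = A (k-1) + Xₖᵀ Xₖ`, so `I - R k Xₖᵀ Xₖ = R k A (k-1)`, and
`R k A (k-1) W (k-1) = R k Q (k-1)`; adding `R k Xₖᵀ Yₖ` gives `R k Q k = W k`.
-/

open Matrix Finset

namespace Matrix

variable {n : Type*} [Fintype n] [DecidableEq n]

theorem posDef_sum_transpose_mul_self_add_smul_one {ι : Type*} {m : ι → Type*}
    [∀ i, Fintype (m i)] (s : Finset ι) (X : (i : ι) → Matrix (m i) n ℝ) {γ : ℝ}
    (hγ : 0 < γ) : (∑ i ∈ s, (X i)ᵀ * X i + γ • (1 : Matrix n n ℝ)).PosDef :=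
  PosDef.posSemidef_add
    (posSemidef_sum s fun i _ => by simpa using posSemidef_conjTranspose_mul_self (X i))
    (PosDef.one.smul hγ)

variable {R p : Type*} [CommRing R]

theorem one_sub_nonsing_inv_add_mul (A B : Matrix n n R) (h : IsUnit (A + B).det) :
    1 - (A + B)⁻¹ * B = (A + B)⁻¹ * A := by
  rw [sub_eq_iff_eq_add, ← Matrix.mul_add, nonsing_inv_mul _ h]

theorem nonsing_inv_add_mul_add_eq (A B : Matrix n n R) (Q P : Matrix n p R)
    (hA : IsUnit A.det) (hAB : IsUnit (A + B).det) :
    (A + B)⁻¹ * (Q + P) = (1 - (A + B)⁻¹ * B) * (A⁻¹ * Q) + (A + B)⁻¹ * P := by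
  rw [one_sub_nonsing_inv_add_mul A B hAB, Matrix.mul_assoc, mul_nonsing_inv_cancel_left _ _ hA,
    Matrix.mul_add]

end Matrix

theorem stmt_1_general (γ : ℝ) (hγ : 0 < γ) (d C : ℕ)
    (N : ℕ → ℕ)
    (X : (i : ℕ) → Matrix (Fin (N i)) (Fin d) ℝ)
    (Y : (i : ℕ) → Matrix (Fin (N i)) (Fin C) ℝ)
    (R : ℕ → Matrix (Fin d) (Fin d) ℝ)
    (Q : ℕ → Matrix (Fin d) (Fin C) ℝ)
    (W : ℕ → Matrix (Fin d) (Fin C) ℝ)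
    (hR : ∀ j : ℕ,
      R j = (∑ i ∈ Finset.Icc 1 j, (X i)ᵀ * X i
        + γ • (1 : Matrix (Fin d) (Fin d) ℝ))⁻¹)
    (hQ : ∀ j : ℕ, Q j = ∑ i ∈ Finset.Icc 1 j, (X i)ᵀ * Y i)
    (hW : ∀ j : ℕ, W j = R j * Q j)
    (k : ℕ) (hk : 1 ≤ k) :
    W 0 = 0 ∧
    W k = ((1 : Matrix (Fin d) (Fin d) ℝ) - R k * (X k)ᵀ * X k) * W (k - 1)
        + R k * (X k)ᵀ * Y k := by
  set A : ℕ → Matrix (Fin d) (Fin d) ℝ :=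
    fun j => ∑ i ∈ Icc 1 j, (X i)ᵀ * X i + γ • (1 : Matrix (Fin d) (Fin d) ℝ) with hA
  have hR_inv (j : ℕ) : R j = (A j)⁻¹ := hR j
  have hA_unit (j : ℕ) : IsUnit (A j).det :=
    (posDef_sum_transpose_mul_self_add_smul_one _ X hγ).det_pos.ne'.isUnit
  refine ⟨by simp [hW, hQ], ?_⟩
  obtain ⟨m, rfl⟩ : ∃ m, k = m + 1 := ⟨k - 1, by omega⟩
  have hA_succ : A (m + 1) = A m + (X (m + 1))ᵀ * X (m + 1) := by
    simp only [hA, sum_Icc_succ_top (Nat.le_add_left 1 m)]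
    abel
  have hQ_succ : Q (m + 1) = Q m + (X (m + 1))ᵀ * Y (m + 1) := by
    rw [hQ, hQ, sum_Icc_succ_top (Nat.le_add_left 1 m)]
  rw [Nat.add_sub_cancel, hW, hW, hQ_succ, hR_inv, hR_inv, hA_succ, Matrix.mul_assoc _ _ (X _),
    Matrix.mul_assoc _ _ (Y _)]
  exact nonsing_inv_add_mul_add_eq _ _ _ _ (hA_unit m) (hA_succ ▸ hA_unit (m + 1))

/-- Weight-invariant property (Theorem 2 of the paper): the joint
ridge-regression weight `W j = R j * Q j`, with
`R j = (∑_{i=1}^{j} Xᵢᵀ Xᵢ + γ I)⁻¹` and `Q j = ∑_{i=1}^{j} Xᵢᵀ Yᵢ`,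
satisfies the recursion `W k = (I - R k Xₖᵀ Xₖ) W (k-1) + R k Xₖᵀ Yₖ`
for every `k ≥ 1`, with `W 0 = 0`. -/
theorem stmt_1 (γ : ℝ) (hγ : 0 < γ) (d C : ℕ) (hd : 0 < d) (hC : 0 < C)
    (N : ℕ → ℕ)
    (X : (i : ℕ) → Matrix (Fin (N i)) (Fin d) ℝ)
    (Y : (i : ℕ) → Matrix (Fin (N i)) (Fin C) ℝ)
    (R : ℕ → Matrix (Fin d) (Fin d) ℝ)
    (Q : ℕ → Matrix (Fin d) (Fin C) ℝ)
    (W : ℕ → Matrix (Fin d) (Fin C) ℝ)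
    (hR : ∀ j : ℕ,
      R j = (∑ i ∈ Finset.Icc 1 j, (X i)ᵀ * X i
        + γ • (1 : Matrix (Fin d) (Fin d) ℝ))⁻¹)
    (hQ : ∀ j : ℕ, Q j = ∑ i ∈ Finset.Icc 1 j, (X i)ᵀ * Y i)
    (hW : ∀ j : ℕ, W j = R j * Q j)
    (k : ℕ) (hk : 1 ≤ k) :
    W 0 = 0 ∧
    W k = ((1 : Matrix (Fin d) (Fin d) ℝ) - R k * (X k)ᵀ * X k) * W (k - 1)
        + R k * (X k)ᵀ * Y k :=
  stmt_1_general γ hγ d C N X Y R Q W hR hQ hW k hk
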